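/- Let μ₋ ≥ 0, ω > 0, l ∈ ℕ, k ∈ ℕ with l > k, and define on [0, μ₋ + ω] the function φ_log(z) = log⁺( (ω/2^k) / (ω/2^k - (z - (μ₋ + ω - ω/2^k))₊ + ω/2^l) ). Then for all z ≥ μ₋ + ω - ω/2^l, one has φ_log(z) ≥ (l - k - 1) log 2, and for all z ≤ μ₋ + ω, one has φ_log(z) ≤ (l - k) log 2. -/

import Mathlib

open Real

/-! With `a = ω / 2 ^ k` and `b = ω / 2 ^ l`, the argument of the logarithm is `a / (a - m + b)`,
where the truncation `m` is at most `a` for `z ≤ μ₋ + ω`, and at least `a - b` once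
`z ≥ μ₋ + ω - b`. So the denominator is at least `b`, resp. at most `2b`, and the ratio lies
below `a / b`, resp. above `a / (2b)`, whose logarithms are `(l - k) log 2` and
`(l - k - 1) log 2`. -/

lemma max_log_div_sub_add_le {a b m : ℝ} (hb : 0 < b) (hba : b ≤ a) (hma : m ≤ a) :
    max (log (a / (a - m + b))) 0 ≤ log (a / b) := by
  have ha : 0 < a := hb.trans_le hba
  refine max_le (log_le_log (div_pos ha (by linarith)) ?_) (log_nonneg ((one_le_div hb).2 hba))
  exact div_le_div_of_nonneg_left ha.le hb (by linarith)

lemma log_div_sub_log_two_le_max_log_div_sub_add {a b m : ℝ} (ha : 0 < a) (hb : 0 < b)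
    (hm : a - b ≤ m) (hma : m ≤ a) : log (a / b) - log 2 ≤ max (log (a / (a - m + b))) 0 := by
  rw [← log_div (div_pos ha hb).ne' two_ne_zero, div_div]
  refine le_max_of_le_left (log_le_log (by positivity) ?_)
  exact div_le_div_of_nonneg_left ha.le (by linarith) (by linarith)

lemma log_div_pow_two_div_div_pow_two {ω : ℝ} (hω : ω ≠ 0) (k l : ℕ) :
    log (ω / 2 ^ k / (ω / 2 ^ l)) = ((l : ℝ) - k) * log 2 := by
  rw [div_div_div_cancel_left' _ _ hω, log_div (by positivity) (by positivity), log_pow,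
    log_pow]
  ring

theorem stmt_7_general (μm ω : ℝ) (k l : ℕ) (hω : 0 < ω) (hkl : k < l) :
    (∀ z : ℝ, μm + ω - ω / 2 ^ l ≤ z → z ≤ μm + ω →
      ((l : ℝ) - k - 1) * Real.log 2 ≤
        max (Real.log ((ω / 2 ^ k) /
          (ω / 2 ^ k - max (z - (μm + ω - ω / 2 ^ k)) 0 + ω / 2 ^ l))) 0) ∧
    (∀ z : ℝ, 0 ≤ z → z ≤ μm + ω →
      max (Real.log ((ω / 2 ^ k) /
        (ω / 2 ^ k - max (z - (μm + ω - ω / 2 ^ k)) 0 + ω / 2 ^ l))) 0 ≤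
        ((l : ℝ) - k) * Real.log 2) := by
  have hlog := log_div_pow_two_div_div_pow_two hω.ne' k l
  set a := ω / 2 ^ k
  set b := ω / 2 ^ l
  have ha : 0 < a := by positivity
  have hb : 0 < b := by positivity
  have hba : b ≤ a :=
    div_le_div_of_nonneg_left hω.le (by positivity) (pow_le_pow_right₀ one_le_two hkl.le)
  refine ⟨fun z hz hz' => ?_, fun z _ hz' => ?_⟩
  · calc ((l : ℝ) - k - 1) * log 2 = log (a / b) - log 2 := by rw [hlog]; ring
      _ ≤ _ := log_div_sub_log_two_le_max_log_div_sub_add ha hb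
          (le_max_of_le_left (by linarith)) (max_le (by linarith) ha.le)
  · exact hlog ▸ max_log_div_sub_add_le hb hba (max_le (by linarith) ha.le)

theorem stmt_7 (μm ω : ℝ) (k l : ℕ) (hμ : 0 ≤ μm) (hω : 0 < ω) (hkl : k < l) :
    (∀ z : ℝ, μm + ω - ω / 2 ^ l ≤ z → z ≤ μm + ω →
      ((l : ℝ) - k - 1) * Real.log 2 ≤
        max (Real.log ((ω / 2 ^ k) /
          (ω / 2 ^ k - max (z - (μm + ω - ω / 2 ^ k)) 0 + ω / 2 ^ l))) 0) ∧
    (∀ z : ℝ, 0 ≤ z → z ≤ μm + ω →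
      max (Real.log ((ω / 2 ^ k) /
        (ω / 2 ^ k - max (z - (μm + ω - ω / 2 ^ k)) 0 + ω / 2 ^ l))) 0 ≤
        ((l : ℝ) - k) * Real.log 2) :=
  stmt_7_general μm ω k l hω hkl
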